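/- arXiv:1303.3491 — 3 statements merged into one kernel-verified Lean document; each statement's English description precedes it below -/
import Mathlib

section
/- Let n ≥ 1 and σ ∈ B_n. Then for every 1 ≤ i ≤ n, the integers f_i(σ^{-1}) and f_{|σ^{-1}(i)|}(σ) have the same parity. -/
open MvPolynomial

/-- The hyperoctahedral group `Bₙ`, realized as the subgroup of permutations of `ℤ`
that commute with negation and fix every integer of absolute value greater than `n`.
Such a permutation restricts to a bijection `σ` of `{-n,…,-1,1,…,n}` with
`σ(-k) = -σ(k)`, and every such bijection arises from a unique element. -/
def HOct (n : ℕ) : Subgroup (Equiv.Perm ℤ) where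
  carrier := {σ | (∀ k : ℤ, σ (-k) = -(σ k)) ∧ ∀ k : ℤ, (n : ℤ) < |k| → σ k = k}
  one_mem' := by
    refine ⟨fun k => rfl, fun k _ => rfl⟩
  mul_mem' := by
    rintro σ τ ⟨hσ1, hσ2⟩ ⟨hτ1, hτ2⟩
    refine ⟨fun k => ?_, fun k hk => ?_⟩
    · simp [Equiv.Perm.mul_apply, hτ1, hσ1]
    · simp [Equiv.Perm.mul_apply, hτ2 k hk, hσ2 k hk]
  inv_mem' := by
    rintro σ ⟨h1, h2⟩
    refine ⟨fun k => ?_, fun k hk => ?_⟩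
    · apply σ.injective
      rw [Equiv.Perm.coe_inv, Equiv.apply_symm_apply, h1, Equiv.apply_symm_apply]
    · have h := h2 k hk
      nth_rewrite 1 [← h]
      rw [Equiv.Perm.coe_inv, Equiv.symm_apply_apply]

/-- The descent set `Des(σ) = {1 ≤ i ≤ n-1 : σ(i) > σ(i+1)}`. -/
def DesB (n : ℕ) (σ : Equiv.Perm ℤ) : Finset ℕ :=
  (Finset.Ico 1 n).filter fun i => σ ((i : ℤ) + 1) < σ (i : ℤ)

/-- `d_i(σ) = #{j ∈ Des(σ) : j ≥ i}`. -/
def dB (n : ℕ) (σ : Equiv.Perm ℤ) (i : ℕ) : ℕ :=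
  ((DesB n σ).filter fun j => i ≤ j).card

/-- `ε_i(σ)`: `1` if `σ(i) < 0`, `0` otherwise. -/
def epsB (σ : Equiv.Perm ℤ) (i : ℕ) : ℕ := if σ (i : ℤ) < 0 then 1 else 0

/-- `f_i(σ) = 2 d_i(σ) + ε_i(σ)`. -/
def fB (n : ℕ) (σ : Equiv.Perm ℤ) (i : ℕ) : ℕ := 2 * dB n σ i + epsB σ i

/-- The sign `σ(k)/|σ(k)|` as a rational number. -/
def sgnQ (σ : Equiv.Perm ℤ) (k : ℤ) : ℚ := if σ k < 0 then -1 else 1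

/-- For `i : Fin n` (representing the index `i+1 ∈ {1,…,n}`), the element of `Fin n`
representing `|σ(i+1)| ∈ {1,…,n}`. -/
def sIdx {n : ℕ} (σ : Equiv.Perm ℤ) (i : Fin n) : Fin n :=
  ⟨((σ ((i : ℕ) + 1 : ℤ)).natAbs - 1) % n, Nat.mod_lt _ i.pos⟩

/-- The diagonal action of a signed permutation on `ℚ[x₁,…,xₙ,y₁,…,yₙ]`:
`x_k ↦ (σ(k)/|σ(k)|)·x_{|σ(k)|}` and `y_k ↦ (σ(k)/|σ(k)|)·y_{|σ(k)|}`.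
Here `Sum.inl i` is the variable `x_{i+1}` and `Sum.inr i` is `y_{i+1}`. -/
noncomputable def actXY (n : ℕ) (σ : Equiv.Perm ℤ) :
    MvPolynomial (Fin n ⊕ Fin n) ℚ →ₐ[ℚ] MvPolynomial (Fin n ⊕ Fin n) ℚ :=
  aeval (Sum.elim
    (fun i => C (sgnQ σ ((i : ℕ) + 1 : ℤ)) * X (Sum.inl (sIdx σ i)))
    (fun i => C (sgnQ σ ((i : ℕ) + 1 : ℤ)) * X (Sum.inr (sIdx σ i))))

/-- Action of a signed permutation on the `x`-variables only. -/
noncomputable def actX (n : ℕ) (σ : Equiv.Perm ℤ) :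
    MvPolynomial (Fin n ⊕ Fin n) ℚ →ₐ[ℚ] MvPolynomial (Fin n ⊕ Fin n) ℚ :=
  aeval (Sum.elim
    (fun i => C (sgnQ σ ((i : ℕ) + 1 : ℤ)) * X (Sum.inl (sIdx σ i)))
    (fun i => X (Sum.inr i)))

/-- Action of a signed permutation on the `y`-variables only. -/
noncomputable def actY (n : ℕ) (σ : Equiv.Perm ℤ) :
    MvPolynomial (Fin n ⊕ Fin n) ℚ →ₐ[ℚ] MvPolynomial (Fin n ⊕ Fin n) ℚ :=
  aeval (Sum.elim
    (fun i => X (Sum.inl i))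
    (fun i => C (sgnQ σ ((i : ℕ) + 1 : ℤ)) * X (Sum.inr (sIdx σ i))))

/-- The averaging operator `ρ(f) = (1/|Bₙ|) ∑_{σ ∈ Bₙ} σ·f`. -/
noncomputable def rho (n : ℕ) (f : MvPolynomial (Fin n ⊕ Fin n) ℚ) :
    MvPolynomial (Fin n ⊕ Fin n) ℚ :=
  (Nat.card ↥(HOct n) : ℚ)⁻¹ • ∑ᶠ σ : ↥(HOct n), actXY n (σ : Equiv.Perm ℤ) f

/-- The diagonal signed descent monomial
`c_σ = ∏_{i=1}^n x_i^{f_i(σ⁻¹)} y_i^{f_{|σ⁻¹(i)|}(σ)}`. -/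
noncomputable def cMon (n : ℕ) (σ : Equiv.Perm ℤ) : MvPolynomial (Fin n ⊕ Fin n) ℚ :=
  ∏ i : Fin n,
    (X (Sum.inl i) ^ fB n σ⁻¹ ((i : ℕ) + 1) *
      X (Sum.inr i) ^ fB n σ ((σ⁻¹ ((i : ℕ) + 1 : ℤ)).natAbs))

/-- The monomial `x^p y^q`. -/
noncomputable def monXY (n : ℕ) (p q : Fin n → ℕ) : MvPolynomial (Fin n ⊕ Fin n) ℚ :=
  (∏ i : Fin n, X (Sum.inl i) ^ p i) * ∏ i : Fin n, X (Sum.inr i) ^ q i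

/-- The monomial `x^p y^q` is ordered (belongs to `𝒪ₙ`). -/
def OrderedMon (n : ℕ) (p q : Fin n → ℕ) : Prop :=
  (∀ k, Even (p k + q k)) ∧ Antitone p ∧
  (∀ (i : Fin n) (h : (i : ℕ) + 1 < n),
    p i = p ⟨(i : ℕ) + 1, h⟩ → Even (p i) → q ⟨(i : ℕ) + 1, h⟩ ≤ q i) ∧
  (∀ (i : Fin n) (h : (i : ℕ) + 1 < n),
    p i = p ⟨(i : ℕ) + 1, h⟩ → Odd (p i) → q i ≤ q ⟨(i : ℕ) + 1, h⟩)

/-- `σ` is the signed index permutation of a monomial with `y`-exponent sequence `q`: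
(1) `q_{|σ(1)|} ≥ ⋯ ≥ q_{|σ(n)|}`; (2) ties `q_{|σ(i)|} = q_{|σ(j)|}` (`i < j`) force
`σ(i) < σ(i+1) < ⋯ < σ(j)`; (3) `q_{|σ(i)|}` is even iff `σ(i) > 0`. -/
def IsSignedIndexPerm (n : ℕ) (q : Fin n → ℕ) (σ : Equiv.Perm ℤ) : Prop :=
  σ ∈ HOct n ∧
  Antitone (fun i : Fin n => q (sIdx σ i)) ∧
  (∀ i j : Fin n, i < j → q (sIdx σ i) = q (sIdx σ j) →
    ∀ k l : Fin n, i ≤ k → k < l → l ≤ j →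
      σ ((k : ℕ) + 1 : ℤ) < σ ((l : ℕ) + 1 : ℤ)) ∧
  (∀ i : Fin n, Even (q (sIdx σ i)) ↔ 0 < σ ((i : ℕ) + 1 : ℤ))

/-- `𝔰(q) = q` if `q` is even, `-q` if `q` is odd. -/
def sFun (q : ℕ) : ℤ := if Even q then (q : ℤ) else -(q : ℤ)

/-- The decreasing rearrangement `𝔬(q)` of a sequence `q`. -/
def oArr {n : ℕ} (q : Fin n → ℕ) : Fin n → ℕ := fun i => q (Tuple.sort q i.rev)

/-- Strict lexicographic comparison of sequences. -/
def LexLT {n : ℕ} {α : Type*} [LT α] (a b : Fin n → α) : Prop :=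
  ∃ i, (∀ j, j < i → a j = b j) ∧ a i < b i

/-- The monomial `x^{p'} y^{q'}` strictly precedes `x^p y^q` in the total order `≼` on
ordered monomials: either `𝔬(x^{p'}y^{q'}) <_ℓ 𝔬(x^p y^q)` lexicographically, or the
`𝔬`-data agree and `(p', 𝔰(q')) <_ℓ (p, 𝔰(q))` lexicographically. -/
def MonPrec {n : ℕ} (p' q' p q : Fin n → ℕ) : Prop :=
  LexLT (oArr p') (oArr p) ∨
  (oArr p' = oArr p ∧ LexLT (oArr q') (oArr q)) ∨
  (oArr p' = oArr p ∧ oArr q' = oArr q ∧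
    (LexLT p' p ∨ (p' = p ∧ LexLT (fun i => sFun (q' i)) (fun i => sFun (q i)))))

/-- The monomial symmetric polynomial `m_{2ν}(x) = ∑_{[α] ∈ Σₙ/Σₙ(ν)} x^{2α(ν)}`,
i.e. the sum of all distinct monomials `x^{2w}` with `w` a rearrangement of `ν`. -/
noncomputable def mSymX (n : ℕ) (ν : Fin n → ℕ) : MvPolynomial (Fin n ⊕ Fin n) ℚ :=
  ∑ w ∈ Finset.image (fun α : Equiv.Perm (Fin n) => ν ∘ α) Finset.univ,
    ∏ i : Fin n, X (Sum.inl i) ^ (2 * w i)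

/-- The monomial symmetric polynomial `m_{2μ}(y)`. -/
noncomputable def mSymY (n : ℕ) (μ : Fin n → ℕ) : MvPolynomial (Fin n ⊕ Fin n) ℚ :=
  ∑ w ∈ Finset.image (fun α : Equiv.Perm (Fin n) => μ ∘ α) Finset.univ,
    ∏ i : Fin n, X (Sum.inr i) ^ (2 * w i)

/-- The action of a signed permutation on `ℚ[x₁,…,xₙ]`:
`x_k ↦ (σ(k)/|σ(k)|)·x_{|σ(k)|}`. Here the variable `i : Fin n` is `x_{i+1}`. -/
noncomputable def actB (n : ℕ) (σ : Equiv.Perm ℤ) :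
    MvPolynomial (Fin n) ℚ →ₐ[ℚ] MvPolynomial (Fin n) ℚ :=
  aeval fun i => C (sgnQ σ ((i : ℕ) + 1 : ℤ)) * X (sIdx σ i)

/-- The signed descent monomial `b_σ = ∏_{i=1}^n x_i^{f_{|σ⁻¹(i)|}(σ)}`. -/
noncomputable def bMon (n : ℕ) (σ : Equiv.Perm ℤ) : MvPolynomial (Fin n) ℚ :=
  ∏ i : Fin n, X i ^ fB n σ ((σ⁻¹ ((i : ℕ) + 1 : ℤ)).natAbs)


/-!
Modulo 2 both sides reduce to their `ε`-parts. Since `σ` commutes with negation and `σ 0 = 0`,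
`σ |σ⁻¹ i| = ± i` carries the sign of `σ⁻¹ i`, so the two `ε`'s agree.
-/

lemma fB_modEq_epsB (n : ℕ) (σ : Equiv.Perm ℤ) (i : ℕ) : fB n σ i ≡ epsB σ i [MOD 2] := by
  simp [fB, Nat.ModEq]

lemma apply_zero_of_forall_apply_neg {σ : Equiv.Perm ℤ} (hodd : ∀ k : ℤ, σ (-k) = -(σ k)) :
    σ 0 = 0 := by
  have h := hodd 0
  rw [neg_zero] at h
  omega

lemma epsB_inv_eq_epsB_natAbs_inv_apply {σ : Equiv.Perm ℤ} (hodd : ∀ k : ℤ, σ (-k) = -(σ k))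
    {i : ℕ} (hi : 1 ≤ i) : epsB σ⁻¹ i = epsB σ (σ⁻¹ (i : ℤ)).natAbs := by
  set j := σ⁻¹ (i : ℤ)
  have hji : σ j = i := σ.apply_symm_apply i
  have hj0 : j ≠ 0 := fun h => by
    rw [h, apply_zero_of_forall_apply_neg hodd] at hji
    omega
  unfold epsB
  rcases hj0.lt_or_gt with hneg | hpos
  · rw [show ((j.natAbs : ℕ) : ℤ) = -j by omega, hodd, hji, if_pos hneg, if_pos (by omega)]
  · rw [show ((j.natAbs : ℕ) : ℤ) = j by omega, hji, if_neg hpos.not_gt, if_neg (by omega)]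

theorem fB_inv_parity_general (n : ℕ) (σ : Equiv.Perm ℤ) (hσ : σ ∈ HOct n) :
    ∀ i : ℕ, 1 ≤ i → i ≤ n →
      fB n σ⁻¹ i ≡ fB n σ ((σ⁻¹ (i : ℤ)).natAbs) [MOD 2] := by
  intro i hi _
  calc fB n σ⁻¹ i ≡ epsB σ⁻¹ i [MOD 2] := fB_modEq_epsB n σ⁻¹ i
    _ = epsB σ (σ⁻¹ (i : ℤ)).natAbs := epsB_inv_eq_epsB_natAbs_inv_apply hσ.1 hi
    _ ≡ fB n σ ((σ⁻¹ (i : ℤ)).natAbs) [MOD 2] := (fB_modEq_epsB n σ _).symm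

/-- For every `σ ∈ Bₙ` and `1 ≤ i ≤ n`, the numbers `f_i(σ⁻¹)` and
`f_{|σ⁻¹(i)|}(σ)` have the same parity. -/
theorem fB_inv_parity (n : ℕ) (hn : 1 ≤ n) (σ : Equiv.Perm ℤ) (hσ : σ ∈ HOct n) :
    ∀ i : ℕ, 1 ≤ i → i ≤ n →
      fB n σ⁻¹ i ≡ fB n σ ((σ⁻¹ (i : ℤ)).natAbs) [MOD 2] :=
  fB_inv_parity_general n σ hσ
end

section
/- Let n ≥ 1. Then for every σ ∈ B_n, the averaged diagonal signed descent monomial ρ(c_σ) is a nonzero element of ℚ[x_1,…,x_n,y_1,…,y_n]. -/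
open MvPolynomial

/-
Evaluate at `x = y = 1`. A signed permutation `τ` sends `x_i^a y_i^b` to `±x_j^a y_j^b`
with sign `(τ(i)/|τ(i)|)^(a+b)`, and in `c_σ` every exponent sum `a + b = f_i(σ⁻¹) + f_{|σ⁻¹(i)|}(σ)`
is even because `ε_i(σ⁻¹) = ε_{|σ⁻¹(i)|}(σ)`. Hence every `τ·c_σ` evaluates to `1`, and so
does their average `ρ(c_σ)`.
-/

lemma abs_apply_le_of_mem_HOct {n : ℕ} {σ : Equiv.Perm ℤ} (hσ : σ ∈ HOct n) {k : ℤ}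
    (hk : |k| ≤ n) : |σ k| ≤ n := by
  by_contra! h
  rw [σ.injective (hσ.2 (σ k) h)] at h
  exact h.not_ge hk

lemma mem_Icc_apply_of_mem_HOct {n : ℕ} {σ : Equiv.Perm ℤ} (hσ : σ ∈ HOct n) {k : ℤ}
    (hk : k ∈ Set.Icc (-(n : ℤ)) n) : σ k ∈ Set.Icc (-(n : ℤ)) n :=
  abs_le.mp (abs_apply_le_of_mem_HOct hσ (abs_le.mpr hk))

/-- An element of `HOct n` is determined by its restriction to `[-n, n]`. -/
instance finite_HOct (n : ℕ) : Finite (HOct n) := by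
  refine Finite.of_injective (fun σ : HOct n => fun k : Set.Icc (-(n : ℤ)) n =>
    (⟨σ.1 k, mem_Icc_apply_of_mem_HOct σ.2 k.2⟩ : Set.Icc (-(n : ℤ)) n)) ?_
  intro σ τ h
  ext k
  by_cases hk : |k| ≤ n
  · exact congrArg Subtype.val (congrFun h ⟨k, abs_le.mp hk⟩)
  · rw [σ.2.2 k (not_le.mp hk), τ.2.2 k (not_le.mp hk)]

lemma epsB_inv_eq {σ : Equiv.Perm ℤ} (hodd : ∀ k, σ (-k) = -(σ k)) (j : ℕ) :
    epsB σ⁻¹ j = epsB σ (σ⁻¹ j).natAbs := by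
  set m := σ⁻¹ j
  have hσm : σ m = j := Equiv.apply_symm_apply σ _
  unfold epsB
  rcases le_or_gt 0 m with hpos | hneg
  · rw [Int.natCast_natAbs, abs_of_nonneg hpos, hσm, if_neg (by omega), if_neg (by omega)]
  · have : σ (m.natAbs : ℤ) < 0 := by
      rw [Int.natCast_natAbs, abs_of_neg hneg, hodd, hσm]
      have hj : (j : ℤ) ≠ 0 := by
        rintro hj
        have h0 : σ 0 = 0 := by have := hodd 0; rw [neg_zero] at this; omega
        exact hneg.ne (σ.injective (hσm.trans (hj.trans h0.symm)))
      omega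
    rw [if_pos hneg, if_pos this]

lemma even_fB_inv_add_fB {n : ℕ} {σ : Equiv.Perm ℤ} (hodd : ∀ k, σ (-k) = -(σ k)) (j : ℕ) :
    Even (fB n σ⁻¹ j + fB n σ (σ⁻¹ j).natAbs) := by
  unfold fB
  rw [epsB_inv_eq hodd j]
  exact ⟨dB n σ⁻¹ j + dB n σ (σ⁻¹ j).natAbs + epsB σ (σ⁻¹ j).natAbs, by ring⟩

lemma sgnQ_sq (σ : Equiv.Perm ℤ) (k : ℤ) : sgnQ σ k ^ 2 = 1 := by
  unfold sgnQ; split_ifs <;> norm_num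

lemma aeval_one_actXY (n : ℕ) (τ : Equiv.Perm ℤ) (f : MvPolynomial (Fin n ⊕ Fin n) ℚ) :
    aeval (fun _ => (1 : ℚ)) (actXY n τ f) =
      aeval (Sum.elim (fun i : Fin n => sgnQ τ ((i : ℕ) + 1 : ℤ))
        (fun i : Fin n => sgnQ τ ((i : ℕ) + 1 : ℤ))) f := by
  rw [← AlgHom.comp_apply]
  congr 1
  ext (i | i) <;> simp [actXY]

lemma aeval_one_actXY_cMon {n : ℕ} {σ : Equiv.Perm ℤ} (hodd : ∀ k, σ (-k) = -(σ k))
    (τ : Equiv.Perm ℤ) : aeval (fun _ => (1 : ℚ)) (actXY n τ (cMon n σ)) = 1 := by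
  rw [aeval_one_actXY, cMon, map_prod]
  refine Finset.prod_eq_one fun i _ => ?_
  obtain ⟨r, hr⟩ := even_fB_inv_add_fB (n := n) hodd ((i : ℕ) + 1)
  simp only [map_mul, map_pow, aeval_X, Sum.elim_inl, Sum.elim_inr]
  push_cast at hr
  rw [← pow_add, hr, ← two_mul, pow_mul, sgnQ_sq, one_pow]

lemma aeval_one_rho {n : ℕ} {f : MvPolynomial (Fin n ⊕ Fin n) ℚ}
    (hf : ∀ τ ∈ HOct n, aeval (fun _ => (1 : ℚ)) (actXY n τ f) = 1) :
    aeval (fun _ => (1 : ℚ)) (rho n f) = 1 := by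
  have : Fintype (HOct n) := Fintype.ofFinite _
  rw [rho, map_smul, finsum_eq_sum_of_fintype, map_sum,
    Finset.sum_congr rfl fun τ _ => hf _ τ.prop, Finset.sum_const, Finset.card_univ,
    Nat.card_eq_fintype_card, smul_eq_mul, nsmul_one, inv_mul_cancel₀]
  exact_mod_cast Fintype.card_ne_zero

theorem rho_cMon_ne_zero_general (n : ℕ) :
    ∀ σ ∈ HOct n, rho n (cMon n σ) ≠ 0 := by
  intro σ hσ h0
  have h1 : aeval (fun _ => (1 : ℚ)) (rho n (cMon n σ)) = 1 :=
    aeval_one_rho fun τ _ => aeval_one_actXY_cMon hσ.1 τ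
  rw [h0, map_zero] at h1
  exact zero_ne_one h1

/-- For every `σ ∈ Bₙ`, the averaged diagonal signed descent monomial `ρ(c_σ)`
is nonzero. -/
theorem rho_cMon_ne_zero (n : ℕ) (hn : 1 ≤ n) :
    ∀ σ ∈ HOct n, rho n (cMon n σ) ≠ 0 :=
  rho_cMon_ne_zero_general n
end

section
/- Let n ≥ 1, let m(x,y) = x^p y^q ∈ 𝒪_n be an ordered monomial, and let σ ∈ B_n be its signed index permutation. Then the sequence (p_i − f_i(σ^{-1}))_{i=1}^{n} is a weakly decreasing sequence of non-negative even integers. -/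
open MvPolynomial

/-!
Write `T_i = p_i - f_i(σ⁻¹)`. The sign of `σ⁻¹(i)` is the parity of `q_i`, hence of `p_i`, so
`ε_i(σ⁻¹) = p_i mod 2` and `T_i` is even; in particular `T_n = p_n - (p_n mod 2) ≥ 0`.
If `p_i = p_{i+1}`, the tie-breaking rules of `𝒪ₙ` and of the signed index permutation agree and
force `σ⁻¹(i) < σ⁻¹(i+1)`, so `T_i = T_{i+1}`. If `p_i > p_{i+1}`, then `f_i - f_{i+1}` is at most
`2`, and at most `1` when `p_i - p_{i+1}` is odd, because a descent of `σ⁻¹` starting at a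
negative value ends at a negative value.
-/

namespace HOct

variable {n : ℕ} {σ : Equiv.Perm ℤ}

theorem apply_zero (h : σ ∈ HOct n) : σ 0 = 0 := by
  have := h.1 0
  rw [neg_zero] at this
  omega

theorem apply_ne_zero (h : σ ∈ HOct n) {k : ℤ} (hk : k ≠ 0) : σ k ≠ 0 :=
  fun h0 => hk (σ.injective (h0.trans (apply_zero h).symm))

theorem natAbs_apply_le (h : σ ∈ HOct n) {k : ℤ} (hk : |k| ≤ n) : (σ k).natAbs ≤ n := by
  by_contra! hlt
  have hfix := ((HOct n).inv_mem h).2 (σ k) (by rw [Int.abs_eq_natAbs]; exact_mod_cast hlt)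
  rw [Equiv.Perm.coe_inv, Equiv.symm_apply_apply] at hfix
  rw [hfix, Int.abs_eq_natAbs] at hk
  omega

theorem apply_abs_inv_apply (h : σ ∈ HOct n) (k : ℤ) :
    σ |σ⁻¹ k| = if 0 ≤ σ⁻¹ k then k else -k := by
  split_ifs with hk
  · rw [abs_of_nonneg hk, Equiv.Perm.coe_inv, Equiv.apply_symm_apply]
  · rw [abs_of_neg (not_le.mp hk), h.1, Equiv.Perm.coe_inv, Equiv.apply_symm_apply]

theorem exists_sIdx_eq (h : σ ∈ HOct n) (i : Fin n) :
    ∃ j : Fin n, ((j : ℕ) : ℤ) + 1 = |σ⁻¹ ((i : ℕ) + 1 : ℤ)| ∧ sIdx σ j = i := by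
  set a := σ⁻¹ ((i : ℕ) + 1 : ℤ)
  have ha0 : a ≠ 0 := apply_ne_zero ((HOct n).inv_mem h) (by omega)
  have han : a.natAbs ≤ n := natAbs_apply_le ((HOct n).inv_mem h) (by rw [abs_le]; omega)
  refine ⟨⟨a.natAbs - 1, by omega⟩, by simp only [Int.abs_eq_natAbs]; omega, Fin.ext ?_⟩
  have hσa : σ |a| = if 0 ≤ a then (i : ℤ) + 1 else -((i : ℤ) + 1) :=
    apply_abs_inv_apply h _
  have hcast : ((a.natAbs - 1 : ℕ) : ℤ) + 1 = |a| := by rw [Int.abs_eq_natAbs]; omega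
  have hnat : (σ |a|).natAbs = (i : ℕ) + 1 := by rw [hσa]; split_ifs <;> omega
  simp only [sIdx, hcast, hnat, Nat.add_sub_cancel, Nat.mod_eq_of_lt i.2]

end HOct

namespace IsSignedIndexPerm

variable {n : ℕ} {q : Fin n → ℕ} {σ : Equiv.Perm ℤ}

theorem even_iff_pos_inv (hσ : IsSignedIndexPerm n q σ) (i : Fin n) :
    Even (q i) ↔ 0 < σ⁻¹ ((i : ℕ) + 1 : ℤ) := by
  obtain ⟨j, hj, hji⟩ := HOct.exists_sIdx_eq hσ.1 i
  have hpar := hσ.2.2.2 j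
  rw [hji, hj, HOct.apply_abs_inv_apply hσ.1] at hpar
  have hne : σ⁻¹ ((i : ℕ) + 1 : ℤ) ≠ 0 := HOct.apply_ne_zero ((HOct n).inv_mem hσ.1) (by omega)
  rw [hpar]
  split_ifs <;> omega

theorem apply_lt_apply_of_le (hσ : IsSignedIndexPerm n q σ) {j k : Fin n} (hjk : j < k)
    (hq : q (sIdx σ j) ≤ q (sIdx σ k)) : σ ((j : ℕ) + 1 : ℤ) < σ ((k : ℕ) + 1 : ℤ) :=
  hσ.2.2.1 j k hjk (le_antisymm hq (hσ.2.1 hjk.le)) j k le_rfl hjk le_rfl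

end IsSignedIndexPerm

section Descents

variable {n : ℕ} (τ : Equiv.Perm ℤ)

theorem dB_eq_card_filter_Ico {m : ℕ} (hm : 1 ≤ m) :
    dB n τ m = ((Finset.Ico m n).filter fun j : ℕ => τ ((j : ℤ) + 1) < τ j).card := by
  unfold dB DesB
  congr 1
  ext j
  simp only [Finset.mem_filter, Finset.mem_Ico]
  omega

theorem dB_eq_dB_succ_add {m : ℕ} (hm : 1 ≤ m) (hmn : m < n) :
    dB n τ m = dB n τ (m + 1) + if τ ((m : ℤ) + 1) < τ m then 1 else 0 := by
  rw [dB_eq_card_filter_Ico τ hm, dB_eq_card_filter_Ico τ (by omega),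
    ← Finset.insert_Ico_add_one_left_eq_Ico hmn, Finset.filter_insert]
  split_ifs <;> simp

theorem dB_self : dB n τ n = 0 := by
  simp only [dB, DesB, Finset.filter_filter, Finset.card_eq_zero, Finset.filter_eq_empty_iff,
    Finset.mem_Ico]
  omega

end Descents

namespace OrderedMon

variable {n : ℕ} {p q : Fin n → ℕ} {σ : Equiv.Perm ℤ}

theorem even_iff_pos_inv (hO : OrderedMon n p q) (hσ : IsSignedIndexPerm n q σ) (i : Fin n) :
    Even (p i) ↔ 0 < σ⁻¹ ((i : ℕ) + 1 : ℤ) :=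
  (Nat.even_add.mp (hO.1 i)).trans (hσ.even_iff_pos_inv i)

theorem inv_apply_lt_of_eq (hO : OrderedMon n p q) (hσ : IsSignedIndexPerm n q σ)
    (i : Fin n) (h : (i : ℕ) + 1 < n) (hp : p i = p ⟨i + 1, h⟩) :
    σ⁻¹ ((i : ℕ) + 1 : ℤ) < σ⁻¹ ((i : ℕ) + 2 : ℤ) := by
  obtain ⟨j, hj, hji⟩ := HOct.exists_sIdx_eq hσ.1 i
  obtain ⟨k, hk, hki⟩ := HOct.exists_sIdx_eq hσ.1 ⟨i + 1, h⟩
  have hσj := HOct.apply_abs_inv_apply hσ.1 ((i : ℕ) + 1 : ℤ)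
  have hσk := HOct.apply_abs_inv_apply hσ.1 ((i + 1 : ℕ) + 1 : ℤ)
  rw [← hj] at hσj
  rw [← hk] at hσk
  have hpi := hO.even_iff_pos_inv hσ i
  have hpi' := hO.even_iff_pos_inv hσ ⟨i + 1, h⟩
  rw [← hp] at hpi'
  -- `j + 1` and `k + 1` are the positions `|σ⁻¹(i+1)|`, `|σ⁻¹(i+2)|`. In the wrong order they
  -- would make `q ∘ sIdx σ` tie there, and the tie rule would order `σ` the wrong way on them.
  rcases Nat.even_or_odd (p i) with hev | hodd
  · have hq := hO.2.2.1 i h hp hev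
    have hjk : j < k := by
      by_contra! hkj
      rcases hkj.lt_or_eq with hkj | rfl
      · have := hσ.apply_lt_apply_of_le hkj (by rwa [hji, hki])
        rw [hσj, hσk] at this
        split_ifs at this <;> grind
      · grind
    grind
  · have hq := hO.2.2.2 i h hp hodd
    have hkj : k < j := by
      by_contra! hjk
      rcases hjk.lt_or_eq with hjk | rfl
      · have := hσ.apply_lt_apply_of_le hjk (by rwa [hji, hki])
        rw [hσj, hσk] at this
        split_ifs at this <;> grind
      · grind
    grind

theorem fB_inv_eq (hO : OrderedMon n p q) (hσ : IsSignedIndexPerm n q σ) (i : Fin n) :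
    fB n σ⁻¹ ((i : ℕ) + 1) = 2 * dB n σ⁻¹ ((i : ℕ) + 1) + p i % 2 := by
  have hpar := hO.even_iff_pos_inv hσ i
  have hne : σ⁻¹ ((i : ℕ) + 1 : ℤ) ≠ 0 := HOct.apply_ne_zero ((HOct n).inv_mem hσ.1) (by omega)
  rw [Nat.even_iff] at hpar
  simp only [fB, epsB, Nat.cast_add, Nat.cast_one]
  split_ifs <;> omega

theorem even_p_sub_fB (hO : OrderedMon n p q) (hσ : IsSignedIndexPerm n q σ) (i : Fin n) :
    Even ((p i : ℤ) - fB n σ⁻¹ ((i : ℕ) + 1)) := by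
  rw [hO.fB_inv_eq hσ i, Int.even_iff]
  omega

theorem p_sub_fB_succ_le (hO : OrderedMon n p q) (hσ : IsSignedIndexPerm n q σ) (i : Fin n)
    (h : (i : ℕ) + 1 < n) :
    (p ⟨i + 1, h⟩ : ℤ) - fB n σ⁻¹ ((i : ℕ) + 1 + 1) ≤ p i - fB n σ⁻¹ ((i : ℕ) + 1) := by
  have hd := dB_eq_dB_succ_add σ⁻¹ (Nat.le_add_left 1 i) h
  have hf := hO.fB_inv_eq hσ i
  have hf' := hO.fB_inv_eq hσ ⟨i + 1, h⟩
  have hpar := hO.even_iff_pos_inv hσ i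
  have hpar' := hO.even_iff_pos_inv hσ ⟨i + 1, h⟩
  have hle : p ⟨i + 1, h⟩ ≤ p i := hO.2.1 (Fin.le_def.mpr (Nat.le_succ i))
  have hdesc := hO.inv_apply_lt_of_eq hσ i h
  simp only [Nat.even_iff, Nat.cast_add, Nat.cast_one] at hd hf' hpar hpar'
  split_ifs at hd <;> grind

theorem zero_le_p_sub_fB_of_last (hO : OrderedMon n p q) (hσ : IsSignedIndexPerm n q σ)
    (i : Fin n) (hi : (i : ℕ) + 1 = n) : 0 ≤ (p i : ℤ) - fB n σ⁻¹ ((i : ℕ) + 1) := by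
  rw [hO.fB_inv_eq hσ i, hi, dB_self]
  omega

end OrderedMon

/-- For an ordered monomial `x^p y^q ∈ 𝒪ₙ` with signed index permutation `σ`, the
sequence `(p_i - f_i(σ⁻¹))_{i=1}^n` is a weakly decreasing sequence of non-negative
even integers. -/
theorem p_sub_f_decreasing (n : ℕ) (hn : 1 ≤ n) (p q : Fin n → ℕ)
    (hO : OrderedMon n p q) (σ : Equiv.Perm ℤ) (hσ : IsSignedIndexPerm n q σ) :
    (∀ i : Fin n, 0 ≤ (p i : ℤ) - (fB n σ⁻¹ ((i : ℕ) + 1) : ℤ)) ∧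
    (∀ i : Fin n, Even ((p i : ℤ) - (fB n σ⁻¹ ((i : ℕ) + 1) : ℤ))) ∧
    Antitone (fun i : Fin n => (p i : ℤ) - (fB n σ⁻¹ ((i : ℕ) + 1) : ℤ)) := by
  obtain ⟨m, rfl⟩ : ∃ m, n = m + 1 := ⟨n - 1, by omega⟩
  have hanti :
      Antitone (fun i : Fin (m + 1) => (p i : ℤ) - (fB (m + 1) σ⁻¹ ((i : ℕ) + 1) : ℤ)) :=
    Fin.antitone_iff_succ_le.mpr fun i =>
      hO.p_sub_fB_succ_le hσ i.castSucc (Nat.succ_lt_succ i.is_lt)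
  refine ⟨fun i => ?_, hO.even_p_sub_fB hσ, hanti⟩
  exact (hO.zero_le_p_sub_fB_of_last hσ (Fin.last m) rfl).trans (hanti (Fin.le_last i))
end
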